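/- arXiv:2409.19682 — 3 statements merged into one kernel-verified Lean document; each statement's English description precedes it below -/
import Mathlib

section
/- With the Proposition-2 data, the pulled-back first Cartan structure equations for the complex coframe leg hold: dM = Γ₁₂ ∧ M + dζ ∧ K, and moreover dζ̄ ∧ M + dζ ∧ M̄ = 0. -/
noncomputable section
open Complex

/-- Points of `N = ℝ × ℂ`, coordinates `(r, ζ)`. -/
abbrev Pt : Type := ℝ × ℂ

/-- Complex-valued 1-forms on `N`. -/
abbrev Form1 : Type := Pt → (Pt →L[ℝ] ℂ)

/-- Exterior derivative of a 1-form: `dω(p)(u,v) = (Dω(p)u)(v) − (Dω(p)v)(u)`. -/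
def extd (ω : Form1) (p u v : Pt) : ℂ :=
  (fderiv ℝ ω p u) v - (fderiv ℝ ω p v) u

/-- Wedge product of 1-forms evaluated on two vectors. -/
def wedge (α β : Form1) (p u v : Pt) : ℂ :=
  α p u * β p v - α p v * β p u

/-- The constant 1-form `dr` : `(u₁,u₂) ↦ u₁`. -/
def dr : Pt →L[ℝ] ℂ := Complex.ofRealCLM.comp (ContinuousLinearMap.fst ℝ ℝ ℂ)

/-- The constant 1-form `dζ` : `(u₁,u₂) ↦ u₂`. -/
def dz : Pt →L[ℝ] ℂ := ContinuousLinearMap.snd ℝ ℝ ℂ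

/-- The constant 1-form `dζ̄` : `(u₁,u₂) ↦ conj u₂`. -/
def dzb : Pt →L[ℝ] ℂ :=
  Complex.conjCLE.toContinuousLinearMap.comp (ContinuousLinearMap.snd ℝ ℝ ℂ)

/-- Wirtinger derivative `f_ζ = ½(∂f/∂x − i ∂f/∂y)`. -/
def wirtZ (f : ℂ → ℂ) (z : ℂ) : ℂ :=
  (fderiv ℝ f z 1 - Complex.I * fderiv ℝ f z Complex.I) / 2

/-- Wirtinger derivative `f_ζ̄ = ½(∂f/∂x + i ∂f/∂y)`. -/
def wirtZb (f : ℂ → ℂ) (z : ℂ) : ℂ :=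
  (fderiv ℝ f z 1 + Complex.I * fderiv ℝ f z Complex.I) / 2

/-- Proposition 2 coframe leg `M = ρ⁻¹ dζ`. -/
def M2 : Form1 := fun p => ((p.1 : ℂ)⁻¹) • dz

/-- Proposition 2 coframe leg `M̄ = ρ⁻¹ dζ̄`. -/
def Mbar2 : Form1 := fun p => ((p.1 : ℂ)⁻¹) • dzb

/-- Proposition 2 coframe leg `K = ρ⁻² dρ + ½ρ(x dζ + x̄ dζ̄)`. -/
def K2 (x : ℂ → ℂ) : Form1 := fun p =>
  (((p.1 : ℂ) ^ 2)⁻¹) • dr + ((1 / 2 : ℂ) * (p.1 : ℂ) * x p.2) • dz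
    + ((1 / 2 : ℂ) * (p.1 : ℂ) * (starRingEnd ℂ) (x p.2)) • dzb

/-- Proposition 2 connection form `Γ₁₂ = ½ρ²(−x dζ + x̄ dζ̄)`. -/
def Γ₁₂ (x : ℂ → ℂ) : Form1 := fun p =>
  ((1 / 2 : ℂ) * (p.1 : ℂ) ^ 2 * (-(x p.2))) • dz
    + ((1 / 2 : ℂ) * (p.1 : ℂ) ^ 2 * (starRingEnd ℂ) (x p.2)) • dzb

/-- Proposition 2 connection form `Γ₃₄ = −½ρ²(x dζ + x̄ dζ̄)`. -/
def Γ₃₄ (x : ℂ → ℂ) : Form1 := fun p =>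
  (-(1 / 2 : ℂ) * (p.1 : ℂ) ^ 2 * x p.2) • dz
    + (-(1 / 2 : ℂ) * (p.1 : ℂ) ^ 2 * (starRingEnd ℂ) (x p.2)) • dzb

/-- Proposition 2 connection form `Γ₁₄ = −dζ̄`. -/
def Γ₁₄ : Form1 := fun _ => -dzb

/-- Proposition 2 Weyl scalar `Ψ₁ = ρ⁴ x`. -/
def Psi1 (x : ℂ → ℂ) : Pt → ℂ := fun p => (p.1 : ℂ) ^ 4 * x p.2

/-- Proposition 2 Weyl scalar `Ψ₂ = aρ³ − (2/3)ρ⁶ x x̄ + ρ⁴ x_ζ̄`. -/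
def Psi2 (x : ℂ → ℂ) (a : ℂ → ℝ) : Pt → ℂ := fun p =>
  (a p.2 : ℂ) * (p.1 : ℂ) ^ 3
    - (2 / 3 : ℂ) * (p.1 : ℂ) ^ 6 * x p.2 * (starRingEnd ℂ) (x p.2)
    + (p.1 : ℂ) ^ 4 * wirtZb x p.2

/-- Proposition 2 function `p = Ψ₂ − R/24 + ½ρ⁴(ρ² x x̄ − x_ζ̄)`. -/
def pfun (R : ℝ) (x : ℂ → ℂ) (a : ℂ → ℝ) : Pt → ℂ := fun p =>
  Psi2 x a p - (R : ℂ) / 24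
    + (1 / 2 : ℂ) * (p.1 : ℂ) ^ 4
      * ((p.1 : ℂ) ^ 2 * x p.2 * (starRingEnd ℂ) (x p.2) - wirtZb x p.2)

/-- Proposition 2 connection form `Γ₂₃ = (p/ρ²) dζ + q dζ̄`. -/
def Γ₂₃ (R : ℝ) (x q : ℂ → ℂ) (a : ℂ → ℝ) : Form1 := fun p =>
  (pfun R x a p / (p.1 : ℂ) ^ 2) • dz + (q p.2) • dzb

/-- With the Proposition-2 data, on `U = {ρ > 0}` the pulled-back first
Cartan structure equations for the complex coframe leg hold:
`dM = Γ₁₂ ∧ M + dζ ∧ K`, and `dζ̄ ∧ M + dζ ∧ M̄ = 0`. -/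
theorem prop2_first_cartan_complex_leg (R : ℝ) (x q : ℂ → ℂ) (a : ℂ → ℝ)
    (hx : ContDiff ℝ (⊤ : ℕ∞) x) (hq : ContDiff ℝ (⊤ : ℕ∞) q) (ha : ContDiff ℝ (⊤ : ℕ∞) a) :
    ∀ p : Pt, 0 < p.1 → ∀ u v : Pt,
      extd M2 p u v = wedge (Γ₁₂ x) M2 p u v + wedge (fun _ => dz) (K2 x) p u v
      ∧ wedge (fun _ => dzb) M2 p u v + wedge (fun _ => dz) Mbar2 p u v = 0 := by
  intro p hp u v
  have hρ : (p.1 : ℂ) ≠ 0 := by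
    exact_mod_cast ne_of_gt hp
  -- derivative of the coefficient ρ⁻¹
  have hdr : HasFDerivAt (fun q : Pt => (q.1 : ℂ)) dr p := dr.hasFDerivAt
  have hinv : HasFDerivAt (fun q : Pt => ((q.1 : ℂ))⁻¹)
      ((-ContinuousLinearMap.mulLeftRight ℝ ℂ ((p.1:ℂ))⁻¹ ((p.1:ℂ))⁻¹).comp dr) p :=
    (hasFDerivAt_inv' hρ).comp p hdr
  have hM : HasFDerivAt M2
      (((-ContinuousLinearMap.mulLeftRight ℝ ℂ ((p.1:ℂ))⁻¹ ((p.1:ℂ))⁻¹).comp dr).smulRight dz) p :=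
    hinv.smul_const dz
  have hfd := hM.fderiv
  constructor
  · rw [extd, hfd]
    simp only [wedge, M2, Γ₁₂, K2, ContinuousLinearMap.smulRight_apply,
      ContinuousLinearMap.comp_apply, ContinuousLinearMap.neg_apply,
      ContinuousLinearMap.mulLeftRight_apply, ContinuousLinearMap.add_apply,
      ContinuousLinearMap.smul_apply, dr, dz, dzb, ContinuousLinearMap.coe_comp',
      Function.comp_apply, ContinuousLinearMap.coe_fst', ContinuousLinearMap.coe_snd',
      Complex.ofRealCLM_apply, ContinuousLinearEquiv.coe_coe, Complex.conjCLE_apply,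
      smul_eq_mul]
    field_simp
    ring
  · simp only [wedge, M2, Mbar2, ContinuousLinearMap.smul_apply, dz, dzb,
      ContinuousLinearMap.coe_snd', ContinuousLinearEquiv.coe_coe, Complex.conjCLE_apply,
      ContinuousLinearMap.coe_comp', Function.comp_apply, smul_eq_mul]
    ring
end
end

section
/- With the Proposition-2 data, the pulled-back second Cartan structure equation for Γ₁₂ + Γ₃₄ in an Einstein spacetime holds: ½·d(Γ₁₂ + Γ₃₄) = Γ₂₃ ∧ Γ₁₄ + (Ψ₂ − R/24)·(M ∧ M̄) − Ψ₁·(K ∧ M). -/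
noncomputable section
open Complex

lemma fderiv_wirt (x : ℂ → ℂ) (z w : ℂ) :
    fderiv ℝ x z w = wirtZ x z * w + wirtZb x z * (starRingEnd ℂ) w := by
  set L := fderiv ℝ x z with hL
  have h1 : w = w.re • (1:ℂ) + w.im • Complex.I := by
    simp [Complex.real_smul, Complex.re_add_im]
  have h2 : L w = w.re • L 1 + w.im • L Complex.I := by
    conv_lhs => rw [h1]
    rw [map_add, map_smul, map_smul]
  have hw : (starRingEnd ℂ) w = (w.re : ℂ) - (w.im : ℂ) * Complex.I := by
    apply Complex.ext <;> simp
  rw [h2, hw, wirtZ, wirtZb, ← hL]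
  have h3 : (w : ℂ) = (w.re : ℂ) + (w.im : ℂ) * Complex.I := (Complex.re_add_im w).symm
  rw [h3, Complex.real_smul, Complex.real_smul]
  ring_nf
  simp [Complex.I_sq]
  ring

set_option maxHeartbeats 1600000 in
/-- With the Proposition-2 data, on `U = {ρ > 0}` the pulled-back second
Cartan structure equation for `Γ₁₂ + Γ₃₄` in an Einstein spacetime holds:
`½ d(Γ₁₂ + Γ₃₄) = Γ₂₃ ∧ Γ₁₄ + (Ψ₂ − R/24)(M ∧ M̄) − Ψ₁ (K ∧ M)`. -/
theorem prop2_second_cartan_Γ₁₂_plus_Γ₃₄ (R : ℝ) (x q : ℂ → ℂ) (a : ℂ → ℝ)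
    (hx : ContDiff ℝ (⊤ : ℕ∞) x) (hq : ContDiff ℝ (⊤ : ℕ∞) q) (ha : ContDiff ℝ (⊤ : ℕ∞) a) :
    ∀ p : Pt, 0 < p.1 → ∀ u v : Pt,
      (1 / 2 : ℂ) * extd (fun p => Γ₁₂ x p + Γ₃₄ x p) p u v
        = wedge (Γ₂₃ R x q a) Γ₁₄ p u v
          + (Psi2 x a p - (R : ℂ) / 24) * wedge M2 Mbar2 p u v
          - Psi1 x p * wedge (K2 x) M2 p u v := by
  intro p hp u v
  have hρ : ((p.1 : ℝ) : ℂ) ≠ 0 := Complex.ofReal_ne_zero.mpr hp.ne'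
  have hxd : Differentiable ℝ x := hx.differentiable (by simp)
  set f : Pt → ℂ := fun q => -(((q.1 : ℂ)) * ((q.1 : ℂ)) * x q.2) with hf
  have hω : (fun q : Pt => Γ₁₂ x q + Γ₃₄ x q) = fun q => f q • dz := by
    funext q
    apply ContinuousLinearMap.ext
    intro w
    simp [Γ₁₂, Γ₃₄, dz, dzb, hf]
    ring
  rw [extd, hω]
  -- derivative of f
  have hg : HasFDerivAt (fun q : Pt => ((q.1 : ℂ))) dr p := dr.hasFDerivAt
  have hh : HasFDerivAt (fun q : Pt => x q.2)
      ((fderiv ℝ x p.2).comp (ContinuousLinearMap.snd ℝ ℝ ℂ)) p :=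
    ((hxd p.2).hasFDerivAt).comp p hasFDerivAt_snd
  have hfd : HasFDerivAt f _ p := (((hg.mul hg)).mul hh).neg
  set T : ℂ →L[ℝ] (Pt →L[ℝ] ℂ) :=
    ((ContinuousLinearMap.lsmul ℝ ℂ : ℂ →L[ℝ] (Pt →L[ℝ] ℂ) →L[ℝ] (Pt →L[ℝ] ℂ)).flip dz) with hT
  have hTf := T.hasFDerivAt.comp p hfd
  have heq : (⇑T ∘ f) = fun q : Pt => f q • dz := rfl
  rw [heq] at hTf
  rw [hTf.fderiv]
  have hx_u := fderiv_wirt x p.2 u.2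
  have hx_v := fderiv_wirt x p.2 v.2
  simp only [wedge, Γ₂₃, Γ₁₄, M2, Mbar2, K2, Psi1, Psi2, pfun, dz, dzb, dr, hT,
    ContinuousLinearMap.comp_apply, ContinuousLinearMap.flip_apply,
    ContinuousLinearMap.lsmul_apply, ContinuousLinearMap.smul_apply,
    ContinuousLinearMap.add_apply, ContinuousLinearMap.neg_apply,
    ContinuousLinearMap.coe_fst', ContinuousLinearMap.coe_snd',
    ContinuousLinearEquiv.coe_coe, Complex.conjCLE_apply, Complex.ofRealCLM_apply,
    smul_eq_mul, Pi.mul_apply, hx_u, hx_v]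
  field_simp [hρ]
  ring_nf
end
end

section
/- With the Proposition-2 data, define Ψ₃ := ρ²·(p/ρ²)_ζ̄ − ρ²·q_ζ − ρ⁴·x·q − ½ρ²·(Ψ₂ + R/12)·x̄. Then the pulled-back second Cartan structure equation for Γ₂₃ in an Einstein spacetime holds: dΓ₂₃ = (Γ₁₂ + Γ₃₄) ∧ Γ₂₃ − Ψ₃·(M ∧ M̄) + (Ψ₂ + R/12)·(K ∧ M), where Γ₁₂ + Γ₃₄ = −ρ²x dζ. (In particular the dρ∧dζ component gives ∂_ρ(p/ρ²) = (Ψ₂ + R/12)·ρ^{−3} and the dρ∧dζ̄ component gives ∂_ρ q = 0.) -/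
noncomputable section
open Complex

/-- Proposition 2 Weyl scalar
`Ψ₃ = ρ² (p/ρ²)_ζ̄ − ρ² q_ζ − ρ⁴ x q − ½ρ² (Ψ₂ + R/12) x̄`,
where `(p/ρ²)_ζ̄` is the Wirtinger `ζ̄`-derivative at fixed `ρ`. -/
def Psi3 (R : ℝ) (x q : ℂ → ℂ) (a : ℂ → ℝ) : Pt → ℂ := fun p =>
  (p.1 : ℂ) ^ 2 * wirtZb (fun z => pfun R x a (p.1, z) / (p.1 : ℂ) ^ 2) p.2
    - (p.1 : ℂ) ^ 2 * wirtZ q p.2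
    - (p.1 : ℂ) ^ 4 * x p.2 * q p.2
    - (1 / 2 : ℂ) * (p.1 : ℂ) ^ 2 * (Psi2 x a p + (R : ℂ) / 12) * (starRingEnd ℂ) (x p.2)


/-- Decomposition of a real-linear map `ℂ → ℂ` into Wirtinger pieces. -/
lemma clm_decomp (L : ℂ →L[ℝ] ℂ) (w : ℂ) :
    L w = (L 1 - Complex.I * L Complex.I) / 2 * w
        + (L 1 + Complex.I * L Complex.I) / 2 * (starRingEnd ℂ) w := by
  have hw : w = (w.re : ℝ) • (1 : ℂ) + (w.im : ℝ) • Complex.I := by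
    simp [Complex.real_smul, Complex.re_add_im]
  have h1 : L w = (w.re : ℂ) * L 1 + (w.im : ℂ) * L Complex.I := by
    conv_lhs => rw [hw]
    rw [map_add, L.map_smul, L.map_smul, Complex.real_smul, Complex.real_smul]
  have h2 : (starRingEnd ℂ) w = (w.re : ℂ) - (w.im : ℂ) * Complex.I := by
    simp [Complex.ext_iff]
  have h3 : w = (w.re : ℂ) + (w.im : ℂ) * Complex.I := (Complex.re_add_im w).symm
  have hI := Complex.I_sq
  rw [h1, h2]
  linear_combination (-(L 1 - Complex.I * L Complex.I) / 2) * h3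
    + ((w.im : ℂ) * L Complex.I) * hI

lemma hasDerivAt_ofReal (t : ℝ) : HasDerivAt (fun t : ℝ => (t : ℂ)) 1 t := by
  exact Complex.ofRealCLM.hasDerivAt (x := t)

lemma hasDerivAt_ofReal_pow (n : ℕ) (t : ℝ) :
    HasDerivAt (fun t : ℝ => (t : ℂ) ^ n) ((n : ℂ) * (t : ℂ) ^ (n - 1)) t := by
  have h2 := ((hasDerivAt_pow n ((t : ℝ) : ℂ)).hasFDerivAt).restrictScalars ℝ
  have h3 := h2.comp_hasDerivAt t (hasDerivAt_ofReal t)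
  simp at h3
  exact h3

section smooth
variable {x : ℂ → ℂ} {a : ℂ → ℝ}

lemma contDiff_wirtZb (hx : ContDiff ℝ (⊤ : ℕ∞) x) : ContDiff ℝ (⊤ : ℕ∞) (wirtZb x) := by
  have hd : ContDiff ℝ (⊤ : ℕ∞) (fderiv ℝ x) := hx.fderiv_right (by exact_mod_cast le_top)
  have h1 : ContDiff ℝ (⊤ : ℕ∞) (fun z => fderiv ℝ x z 1) := hd.clm_apply contDiff_const
  have h2 : ContDiff ℝ (⊤ : ℕ∞) (fun z => fderiv ℝ x z Complex.I) := hd.clm_apply contDiff_const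
  exact (h1.add (contDiff_const.mul h2)).div_const 2

lemma contDiff_pfun (R : ℝ) (hx : ContDiff ℝ (⊤ : ℕ∞) x) (ha : ContDiff ℝ (⊤ : ℕ∞) a) :
    ContDiff ℝ (⊤ : ℕ∞) (pfun R x a) := by
  have hfst : ContDiff ℝ (⊤ : ℕ∞) (fun p : Pt => (p.1 : ℂ)) :=
    Complex.ofRealCLM.contDiff.comp contDiff_fst
  have hxs : ContDiff ℝ (⊤ : ℕ∞) (fun p : Pt => x p.2) :=
    (hx.of_le (by simp)).comp contDiff_snd
  have hxc : ContDiff ℝ (⊤ : ℕ∞) (fun p : Pt => (starRingEnd ℂ) (x p.2)) :=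
    Complex.conjCLE.contDiff.comp hxs
  have hwb : ContDiff ℝ (⊤ : ℕ∞) (fun p : Pt => wirtZb x p.2) :=
    (contDiff_wirtZb hx).comp contDiff_snd
  have has : ContDiff ℝ (⊤ : ℕ∞) (fun p : Pt => ((a p.2 : ℝ) : ℂ)) :=
    Complex.ofRealCLM.contDiff.comp ((ha.of_le (by simp)).comp contDiff_snd)
  have hPsi2 : ContDiff ℝ (⊤ : ℕ∞) (Psi2 x a) := by
    unfold Psi2
    exact ((has.mul (hfst.pow 3)).sub
      (((contDiff_const.mul (hfst.pow 6)).mul hxs).mul hxc)).add ((hfst.pow 4).mul hwb)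
  unfold pfun
  exact (hPsi2.sub contDiff_const).add
    ((contDiff_const.mul (hfst.pow 4)).mul
      ((((hfst.pow 2).mul hxs).mul hxc).sub hwb))

end smooth

lemma hasDerivAt_pquot (R : ℝ) (x : ℂ → ℂ) (a : ℂ → ℝ) (ζ : ℂ) (t : ℝ) (ht : t ≠ 0) :
    HasDerivAt (fun s : ℝ => pfun R x a (s, ζ) / (s : ℂ) ^ 2)
      ((Psi2 x a (t, ζ) + (R : ℂ) / 12) * ((t : ℂ) ^ 3)⁻¹) t := by
  have hrepr : (fun s : ℝ => pfun R x a (s, ζ))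
      = fun s : ℝ => ((a ζ : ℝ) : ℂ) * (s : ℂ) ^ 3
          - 1 / 6 * (x ζ * (starRingEnd ℂ) (x ζ)) * (s : ℂ) ^ 6
          + 1 / 2 * wirtZb x ζ * (s : ℂ) ^ 4 - (R : ℂ) / 24 := by
    funext s
    simp only [pfun, Psi2]
    ring
  have hN : HasDerivAt (fun s : ℝ => pfun R x a (s, ζ))
      (((a ζ : ℝ) : ℂ) * ((3 : ℂ) * (t : ℂ) ^ (3 - 1))
        - 1 / 6 * (x ζ * (starRingEnd ℂ) (x ζ)) * ((6 : ℂ) * (t : ℂ) ^ (6 - 1))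
        + 1 / 2 * wirtZb x ζ * ((4 : ℂ) * (t : ℂ) ^ (4 - 1))) t := by
    rw [hrepr]
    exact ((((hasDerivAt_ofReal_pow 3 t).const_mul _).sub
      ((hasDerivAt_ofReal_pow 6 t).const_mul _)).add
      ((hasDerivAt_ofReal_pow 4 t).const_mul _)).sub_const _
  have hD : HasDerivAt (fun s : ℝ => (s : ℂ) ^ 2) ((2 : ℂ) * (t : ℂ) ^ (2 - 1)) t :=
    hasDerivAt_ofReal_pow 2 t
  have htc : (t : ℂ) ≠ 0 := Complex.ofReal_ne_zero.mpr ht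
  have h := hN.div hD (pow_ne_zero 2 htc)
  refine h.congr_deriv ?_
  symm
  simp only [pfun, Psi2]
  field_simp
  ring

set_option maxHeartbeats 2000000 in
/-- With the Proposition-2 data, on `U = {ρ > 0}` the pulled-back second
Cartan structure equation for `Γ₂₃` in an Einstein spacetime holds:
`dΓ₂₃ = (Γ₁₂ + Γ₃₄) ∧ Γ₂₃ − Ψ₃ (M ∧ M̄) + (Ψ₂ + R/12)(K ∧ M)`, where
`Γ₁₂ + Γ₃₄ = −ρ²x dζ`; in particular the `dρ∧dζ` component gives
`∂_ρ(p/ρ²) = (Ψ₂ + R/12) ρ⁻³` and the `dρ∧dζ̄` component gives `∂_ρ q = 0`. -/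
theorem prop2_second_cartan_Γ₂₃ (R : ℝ) (x q : ℂ → ℂ) (a : ℂ → ℝ)
    (hx : ContDiff ℝ (⊤ : ℕ∞) x) (hq : ContDiff ℝ (⊤ : ℕ∞) q) (ha : ContDiff ℝ (⊤ : ℕ∞) a) :
    ∀ p : Pt, 0 < p.1 →
      (Γ₁₂ x p + Γ₃₄ x p = (-(p.1 : ℂ) ^ 2 * x p.2) • dz)
      ∧ (∀ u v : Pt,
          extd (Γ₂₃ R x q a) p u v
            = wedge (fun p => Γ₁₂ x p + Γ₃₄ x p) (Γ₂₃ R x q a) p u v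
              - Psi3 R x q a p * wedge M2 Mbar2 p u v
              + (Psi2 x a p + (R : ℂ) / 12) * wedge (K2 x) M2 p u v)
      ∧ deriv (fun t : ℝ => pfun R x a (t, p.2) / (t : ℂ) ^ 2) p.1
          = (Psi2 x a p + (R : ℂ) / 12) * ((p.1 : ℂ) ^ 3)⁻¹
      ∧ deriv (fun _ : ℝ => q p.2) p.1 = 0 := by
  intro p hp
  have ht : p.1 ≠ 0 := ne_of_gt hp
  have hρ : (p.1 : ℂ) ≠ 0 := Complex.ofReal_ne_zero.mpr ht
  refine ⟨?_, ?_, (hasDerivAt_pquot R x a p.2 p.1 ht).deriv, by simp⟩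
  · apply ContinuousLinearMap.ext
    intro v
    simp only [Γ₁₂, Γ₃₄, ContinuousLinearMap.add_apply, ContinuousLinearMap.smul_apply,
      smul_eq_mul]
    ring
  · intro u v
    -- differentiability of the coefficient function
    have h1d : DifferentiableAt ℝ (fun p : Pt => ((p.1 : ℝ) : ℂ)) p :=
      (((Complex.ofRealCLM.contDiff.comp contDiff_fst : ContDiff ℝ (⊤ : ℕ∞) fun p : Pt => ((p.1 : ℝ) : ℂ))).differentiable (by simp)).differentiableAt
    have hpd : DifferentiableAt ℝ (fun p : Pt => pfun R x a p) p :=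
      ((contDiff_pfun R hx ha).differentiable (by simp)).differentiableAt
    have hfd : DifferentiableAt ℝ (fun p : Pt => pfun R x a p / (p.1 : ℂ) ^ 2) p :=
      by
        have heq : (fun p : Pt => pfun R x a p / ((p.1 : ℝ) : ℂ) ^ 2)
            = fun p : Pt => pfun R x a p * ((((p.1 : ℝ) : ℂ)) ^ 2)⁻¹ := by
          funext p
          rw [div_eq_mul_inv]
        rw [heq]
        exact hpd.mul ((h1d.pow 2).inv (pow_ne_zero 2 hρ))
    set F := fderiv ℝ (fun p : Pt => pfun R x a p / (p.1 : ℂ) ^ 2) p with hFdef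
    have hfF : HasFDerivAt (fun p : Pt => pfun R x a p / (p.1 : ℂ) ^ 2) F p :=
      hfd.hasFDerivAt
    have hqd : DifferentiableAt ℝ q p.2 := (hq.differentiable (by simp)).differentiableAt
    have hQd : HasFDerivAt (fun p : Pt => q p.2)
        ((fderiv ℝ q p.2).comp (ContinuousLinearMap.snd ℝ ℝ ℂ)) p :=
      hqd.hasFDerivAt.comp p hasFDerivAt_snd
    have hΓ : HasFDerivAt (Γ₂₃ R x q a)
        (F.smulRight dz
          + ((fderiv ℝ q p.2).comp (ContinuousLinearMap.snd ℝ ℝ ℂ)).smulRight dzb) p :=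
      (hfF.smul_const dz).add (hQd.smul_const dzb)
    have hF10 : F (1, 0) = (Psi2 x a p + (R : ℂ) / 12) * ((p.1 : ℂ) ^ 3)⁻¹ := by
      have hcurve : HasDerivAt (fun t : ℝ => ((t : ℝ), p.2)) ((1 : ℝ), (0 : ℂ)) p.1 :=
        (hasDerivAt_id _).prodMk (hasDerivAt_const _ _)
      have h1 := (hfF : HasFDerivAt (fun p : Pt => pfun R x a p / (p.1 : ℂ) ^ 2) F (p.1, p.2)).comp_hasDerivAt p.1 hcurve
      exact h1.unique (hasDerivAt_pquot R x a p.2 p.1 ht)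
    have hhor : HasFDerivAt (fun z : ℂ => pfun R x a (p.1, z) / ((p.1 : ℝ) : ℂ) ^ 2)
        (F.comp (ContinuousLinearMap.inr ℝ ℝ ℂ)) p.2 :=
      by
        have h1 := (hfF : HasFDerivAt (fun p : Pt => pfun R x a p / (p.1 : ℂ) ^ 2) F (p.1, p.2)).comp p.2 (hasFDerivAt_prodMk_right (𝕜 := ℝ) p.1 p.2)
        exact h1
    have hGd : fderiv ℝ (fun z : ℂ => pfun R x a (p.1, z) / ((p.1 : ℝ) : ℂ) ^ 2) p.2
        = F.comp (ContinuousLinearMap.inr ℝ ℝ ℂ) := hhor.fderiv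
    have hW : ∀ w : ℂ, F (0, w)
        = wirtZ (fun z => pfun R x a (p.1, z) / (p.1 : ℂ) ^ 2) p.2 * w
          + wirtZb (fun z => pfun R x a (p.1, z) / (p.1 : ℂ) ^ 2) p.2 * (starRingEnd ℂ) w := by
      intro w
      have h := clm_decomp (F.comp (ContinuousLinearMap.inr ℝ ℝ ℂ)) w
      rw [wirtZ, wirtZb, hGd]
      simpa using h
    have hq' : ∀ w : ℂ, fderiv ℝ q p.2 w
        = wirtZ q p.2 * w + wirtZb q p.2 * (starRingEnd ℂ) w := by
      intro w
      rw [wirtZ, wirtZb]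
      exact clm_decomp _ w
    have hFu : ∀ u : Pt, F u = (u.1 : ℝ) • F (1, 0) + F (0, u.2) := by
      intro u
      have hu : u = (u.1 : ℝ) • ((1 : ℝ), (0 : ℂ)) + ((0 : ℝ), u.2) := by
        apply Prod.ext <;> simp
      conv_lhs => rw [hu]
      rw [map_add, map_smul]
    rw [extd, hΓ.fderiv]
    simp only [ContinuousLinearMap.add_apply, ContinuousLinearMap.smulRight_apply,
      ContinuousLinearMap.comp_apply, ContinuousLinearMap.coe_snd', smul_eq_mul]
    have hF10' : F (1, 0) = (Psi2 x a p + (R : ℂ) / 12) / ((p.1 : ℝ) : ℂ) ^ 3 := by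
      rw [hF10]
      exact (div_eq_mul_inv _ _).symm
    rw [hFu u, hFu v, hF10', hW u.2, hW v.2, hq' u.2, hq' v.2]
    simp only [wedge, Γ₁₂, Γ₃₄, Γ₂₃, Psi3, M2, Mbar2, K2, dz, dzb, dr,
      ContinuousLinearMap.add_apply, ContinuousLinearMap.smul_apply,
      ContinuousLinearMap.comp_apply, ContinuousLinearMap.coe_snd',
      ContinuousLinearEquiv.coe_coe, Complex.conjCLE_apply, Complex.ofRealCLM_apply,
      ContinuousLinearMap.coe_fst', smul_eq_mul, Complex.real_smul]
    set W := wirtZb (fun z => pfun R x a (p.1, z) / ((p.1 : ℝ) : ℂ) ^ 2) p.2 with hWs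
    set S := wirtZ (fun z => pfun R x a (p.1, z) / ((p.1 : ℝ) : ℂ) ^ 2) p.2 with hSs
    set E2 := Psi2 x a p with hE2
    set P := pfun R x a p with hP
    field_simp [hρ]
    ring_nf
end
end
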